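/- Let n ≥ 3 and let v₁,…,v_s ∈ ℝⁿ with 1 ≤ s ≤ n−2 be linearly independent vectors such that the span ⟨v₁,…,v_s⟩ contains no nonzero rational vectors (no nonzero vector of ℚⁿ). Then there exists v_{s+1} ∈ ℝⁿ such that v₁,…,v_{s+1} are linearly independent and the span ⟨v₁,…,v_{s+1}⟩ contains no nonzero rational vectors. -/
import Mathlib

open MeasureTheory Filter Topology Matrix
open scoped ENNReal

noncomputable section

/-- the span of `v₁,…,v_s` contains no nonzero rational vector. -/
def NoRationalVec {n s : ℕ} (v : Fin s → Fin n → ℝ) : Prop :=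
  ∀ w ∈ Submodule.span ℝ (Set.range v), (∀ j, ∃ q : ℚ, w j = (q : ℝ)) → w = 0

/-- **Lemma 3.2.** Linearly independent `v₁,…,v_s` (`1 ≤ s ≤ n-2`) whose span contains no
nonzero rational vector can be extended to `v₁,…,v_{s+1}` with the same property. -/
theorem stmt10 (n s : ℕ) (hn : 3 ≤ n) (hs1 : 1 ≤ s) (hs2 : s ≤ n - 2)
    (v : Fin s → Fin n → ℝ) (hv : LinearIndependent ℝ v) (hnr : NoRationalVec v) :
    ∃ w : Fin n → ℝ, LinearIndependent ℝ (Fin.snoc v w) ∧ NoRationalVec (Fin.snoc v w) := by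
  classical
  set V : Set (Fin n → ℝ) := Set.range v with hV
  set S : (Fin n → ℚ) → Submodule ℝ (Fin n → ℝ) :=
    fun p => Submodule.span ℝ (insert (fun j => ((p j : ℝ))) V) with hS
  have hSne : ∀ p, S p ≠ ⊤ := by
    intro p hp
    have h1 : Module.rank ℝ (S p) ≤ (s : Cardinal) + 1 := by
      refine (rank_span_le _).trans ?_
      refine (Cardinal.mk_insert_le ..).trans ?_
      gcongr
      simpa using Cardinal.mk_range_le (f := v)
    rw [hp] at h1
    have h2 : Module.rank ℝ (⊤ : Submodule ℝ (Fin n → ℝ)) = n := by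
      simp [rank_top]
    rw [h2] at h1
    have : (n : Cardinal) ≤ (s : Cardinal) + 1 := h1
    have hn' : n ≤ s + 1 := by exact_mod_cast this
    omega
  -- measure argument
  have hμ : (volume : Measure (Fin n → ℝ)) (⋃ p : Fin n → ℚ, (S p : Set (Fin n → ℝ))) = 0 := by
    refine measure_iUnion_null fun p => ?_
    exact Measure.addHaar_submodule _ _ (hSne p)
  have hne : (⋃ p : Fin n → ℚ, (S p : Set (Fin n → ℝ))) ≠ Set.univ := by
    intro h
    rw [h] at hμ
    have : (volume : Measure (Fin n → ℝ)) Set.univ ≠ 0 := by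
      simp [Measure.measure_univ_pos]
      exact (NeZero.ne' (volume : Measure (Fin n → ℝ))).symm
    exact this hμ
  obtain ⟨w, hw⟩ : ∃ w, w ∉ ⋃ p : Fin n → ℚ, (S p : Set (Fin n → ℝ)) := by
    by_contra h
    push_neg at h
    exact hne (Set.eq_univ_of_forall h)
  simp only [Set.mem_iUnion, not_exists] at hw
  have hwS : ∀ p : Fin n → ℚ, w ∉ S p := hw
  have hwV : w ∉ Submodule.span ℝ V := by
    intro hmem
    exact hwS 0 (Submodule.span_mono (Set.subset_insert _ _) hmem)
  refine ⟨w, ?_, ?_⟩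
  · exact linearIndependent_fin_snoc.2 ⟨hv, hwV⟩
  · intro x hx hxq
    obtain ⟨p, hp⟩ : ∃ p : Fin n → ℚ, x = fun j => ((p j : ℝ)) := by
      choose p hp using hxq
      exact ⟨p, funext hp⟩
    have hrange : Set.range (Fin.snoc v w : Fin (s+1) → Fin n → ℝ) = insert w V := by
      rw [hV]
      ext y
      constructor
      · rintro ⟨i, rfl⟩
        induction i using Fin.lastCases with
        | last => simp
        | cast i => simp
      · rintro (rfl | ⟨i, rfl⟩)
        exacts [⟨Fin.last s, Fin.snoc_last ..⟩, ⟨i.castSucc, Fin.snoc_castSucc ..⟩]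
    rw [hrange, Submodule.mem_span_insert] at hx
    obtain ⟨a, z, hz, hxz⟩ := hx
    rcases eq_or_ne a 0 with rfl | ha
    · rw [zero_smul, zero_add] at hxz
      exact hnr x (hxz ▸ hz) hxq
    · exfalso
      apply hwS p
      have hx' : x ∈ S p := Submodule.subset_span (Set.mem_insert_iff.2 (Or.inl hp))
      have hz' : z ∈ S p := Submodule.span_mono (Set.subset_insert _ _) hz
      have : a • w ∈ S p := by
        have := Submodule.sub_mem _ hx' hz'
        rwa [hxz, add_sub_cancel_right] at this
      have := Submodule.smul_mem _ a⁻¹ this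
      rwa [smul_smul, inv_mul_cancel₀ ha, one_smul] at this
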